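/- Let D be a complete, cocomplete, extremally co-well-powered, (extremal epi, mono) category. Then KD is extremally co-well-powered. -/

import Mathlib

/-!
Let `f : A → B` be an extremal epimorphism of `KD` and `R` the filtration of `B`. The reduction
`Q` of the pull back `f*(R)` is the smallest reduced filtration containing `f*(R)`, so it is
contained in the filtration of `A`, and `f` factors through `(lim Q, Q')`, where `Q'` is generated
by the limit projections. The comparison `lim Q → B` is a monomorphism, because every element of
`Q` is dominated by an extremal `ε` with `ε ≫ μ = f ≫ b` for a monomorphism `μ`; so it is an
isomorphism. Hence `B` is determined by a reduced filtration on the underlying object of `A`, and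
these form a set: a reduced filtration is determined by the representatives of extremal
epimorphisms it contains. The same representatives form a small initial subdiagram of `Q`, which
is why `lim Q` exists.
-/

open CategoryTheory CategoryTheory.Limits

universe w v u v₂ u₂

namespace FilteredCats

variable {D : Type u} [Category.{v} D]

/-- The class of morphisms of `D` with source `X`. -/
def MorFrom (X : D) : Type (max u v) := Σ Y : D, X ⟶ Y

/-- `Dom δ₁ δ₂` means `δ₁ ≥ δ₂`: there is `h` with `h ∘ δ₁ = δ₂`. -/
def Dom {X : D} (δ₁ δ₂ : MorFrom X) : Prop :=
  ∃ h : δ₁.1 ⟶ δ₂.1, δ₁.2 ≫ h = δ₂.2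

/-- A projective filtration on `X`: a nonempty, directed, saturated class of
morphisms with source `X`. -/
structure ProjFilt (X : D) where
  carrier : Set (MorFrom X)
  nonempty' : carrier.Nonempty
  directed' : ∀ δ₁ ∈ carrier, ∀ δ₂ ∈ carrier, ∃ δ ∈ carrier, Dom δ δ₁ ∧ Dom δ δ₂
  saturated' : ∀ δ₁ ∈ carrier, ∀ δ₂, Dom δ₁ δ₂ → δ₂ ∈ carrier

/-- The pull back of a set of morphisms with source `X` along `f : X' ⟶ X`. -/
def pullSet {X' X : D} (f : X' ⟶ X) (S : Set (MorFrom X)) : Set (MorFrom X') :=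
  {δ' | ∃ δ ∈ S, δ' = ⟨δ.1, f ≫ δ.2⟩}

/-- The pull back of a projective filtration along `f : X' ⟶ X`. -/
def ProjFilt.pull {X' X : D} (f : X' ⟶ X) (P : ProjFilt X) : ProjFilt X' where
  carrier := pullSet f P.carrier
  nonempty' := by
    obtain ⟨δ, hδ⟩ := P.nonempty'
    exact ⟨⟨δ.1, f ≫ δ.2⟩, δ, hδ, rfl⟩
  directed' := by
    rintro _ ⟨δ₁, h₁, rfl⟩ _ ⟨δ₂, h₂, rfl⟩
    obtain ⟨δ, hδ, ⟨g₁, hg₁⟩, ⟨g₂, hg₂⟩⟩ := P.directed' δ₁ h₁ δ₂ h₂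
    exact ⟨⟨δ.1, f ≫ δ.2⟩, ⟨δ, hδ, rfl⟩,
      ⟨g₁, by simp [hg₁]⟩, ⟨g₂, by simp [hg₂]⟩⟩
  saturated' := by
    rintro _ ⟨δ, hδ, rfl⟩ δ₂ ⟨h, hh⟩
    refine ⟨⟨δ₂.1, δ.2 ≫ h⟩, P.saturated' δ hδ _ ⟨h, rfl⟩, ?_⟩
    obtain ⟨Y₂, g₂⟩ := δ₂
    have hg : g₂ = f ≫ (δ.2 ≫ h) := by simpa using hh.symm
    exact Sigma.ext rfl (heq_of_eq hg)

/-- A projectively filtered object of `D`. -/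
structure PObj (D : Type u) [Category.{v} D] where
  base : D
  filt : ProjFilt base

/-- A morphism of projectively filtered objects: a morphism of the underlying
objects such that the pull back of the target filtration is contained in the
source filtration. -/
structure PHom (A B : PObj D) : Type v where
  toHom : A.base ⟶ B.base
  mem : ∀ δ ∈ B.filt.carrier, (⟨δ.1, toHom ≫ δ.2⟩ : MorFrom A.base) ∈ A.filt.carrier

theorem PHom.ext' {A B : PObj D} {f g : PHom A B} (h : f.toHom = g.toHom) : f = g := by
  cases f; cases g; cases h; rfl

instance : Category.{v} (PObj D) where
  Hom := PHom
  id A := ⟨𝟙 A.base, fun δ hδ => by simp only [Category.id_comp]; exact hδ⟩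
  comp {A B C} f g := ⟨f.toHom ≫ g.toHom, fun δ hδ => by
    have h1 := g.mem δ hδ
    have h2 := f.mem _ h1
    simpa using h2⟩
  id_comp f := PHom.ext' (Category.id_comp _)
  comp_id f := PHom.ext' (Category.comp_id _)
  assoc f g h := PHom.ext' (Category.assoc _ _ _)

@[simp] theorem PObj.id_toHom (A : PObj D) : PHom.toHom (𝟙 A) = 𝟙 A.base := rfl
@[simp] theorem PObj.comp_toHom {A B C : PObj D} (f : A ⟶ B) (g : B ⟶ C) :
    PHom.toHom (f ≫ g) = PHom.toHom f ≫ PHom.toHom g := rfl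

/-- The forgetful functor `PD → D`. -/
def Pforget (D : Type u) [Category.{v} D] : PObj D ⥤ D where
  obj A := A.base
  map f := PHom.toHom f

/-- The discrete filtration functor `D → PD`, `X ↦ (X, M(X))`. -/
def Pdiscrete (D : Type u) [Category.{v} D] : D ⥤ PObj D where
  obj X :=
    { base := X
      filt :=
        { carrier := Set.univ
          nonempty' := ⟨⟨X, 𝟙 X⟩, trivial⟩
          directed' := fun δ₁ _ δ₂ _ =>
            ⟨⟨X, 𝟙 X⟩, trivial, ⟨δ₁.2, Category.id_comp _⟩, ⟨δ₂.2, Category.id_comp _⟩⟩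
          saturated' := fun _ _ _ _ => trivial } }
  map f := ⟨f, fun _ _ => trivial⟩

/-- The functor `PD → PE` induced by a functor `G : D → E`. -/
def Pfunctor {E : Type u₂} [Category.{v₂} E] (G : D ⥤ E) : PObj D ⥤ PObj E where
  obj A :=
    { base := G.obj A.base
      filt :=
        { carrier := {δ' | ∃ δ ∈ A.filt.carrier,
            Dom (⟨G.obj δ.1, G.map δ.2⟩ : MorFrom (G.obj A.base)) δ'}
          nonempty' := by
            obtain ⟨δ, hδ⟩ := A.filt.nonempty'
            exact ⟨⟨G.obj δ.1, G.map δ.2⟩, δ, hδ, ⟨𝟙 _, Category.comp_id _⟩⟩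
          directed' := by
            rintro δ'₁ ⟨δ₁, h₁, g₁, hg₁⟩ δ'₂ ⟨δ₂, h₂, g₂, hg₂⟩
            obtain ⟨δ, hδ, ⟨k₁, hk₁⟩, ⟨k₂, hk₂⟩⟩ := A.filt.directed' δ₁ h₁ δ₂ h₂
            refine ⟨⟨G.obj δ.1, G.map δ.2⟩, ⟨δ, hδ, ⟨𝟙 _, Category.comp_id _⟩⟩,
              ⟨G.map k₁ ≫ g₁, ?_⟩, ⟨G.map k₂ ≫ g₂, ?_⟩⟩
            · rw [← Category.assoc, ← G.map_comp, hk₁, hg₁]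
            · rw [← Category.assoc, ← G.map_comp, hk₂, hg₂]
          saturated' := by
            rintro δ'₁ ⟨δ, hδ, g, hg⟩ δ'₂ ⟨h, hh⟩
            exact ⟨δ, hδ, ⟨g ≫ h, by rw [← Category.assoc, hg, hh]⟩⟩ } }
  map {A B} f :=
    ⟨G.map (PHom.toHom f), by
      rintro δ' ⟨δ, hδ, g, hg⟩
      exact ⟨⟨δ.1, PHom.toHom f ≫ δ.2⟩, f.mem δ hδ,
        ⟨g, by rw [← hg, ← Category.assoc, ← G.map_comp]⟩⟩⟩
  map_id A := PHom.ext' (G.map_id _)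
  map_comp f g := PHom.ext' (G.map_comp _ _)

/-- An extremal epimorphism: an epimorphism such that in any factorisation
through a monomorphism, the monomorphism is an isomorphism. -/
def ExtremalEpi {C : Type u₂} [Category.{v₂} C] {X Y : C} (e : X ⟶ Y) : Prop :=
  Epi e ∧ ∀ ⦃Z : C⦄ (g : X ⟶ Z) (m : Z ⟶ Y), Mono m → g ≫ m = e → IsIso m

/-- An (extremal epi, mono) category: every morphism factors as an extremal
epimorphism followed by a monomorphism and such factorisations have the
diagonal fill-in property. -/
structure EMCat (C : Type u₂) [Category.{v₂} C] : Prop where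
  fact : ∀ {X Y : C} (f : X ⟶ Y), ∃ (Z : C) (e : X ⟶ Z) (m : Z ⟶ Y),
    ExtremalEpi e ∧ Mono m ∧ e ≫ m = f
  diag : ∀ {A B Z X : C} (e : A ⟶ B) (m : Z ⟶ X) (g : A ⟶ Z) (h : B ⟶ X),
    ExtremalEpi e → Mono m → g ≫ m = e ≫ h → ∃ d : B ⟶ Z, e ≫ d = g ∧ d ≫ m = h

/-- A projective filtration is reduced if it has an initial subclass of
extremal epimorphisms. -/
def ProjFilt.Reduced {X : D} (P : ProjFilt X) : Prop :=
  ∀ δ ∈ P.carrier, ∃ ε ∈ P.carrier, ExtremalEpi ε.2 ∧ Dom ε δ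

/-- The category of reduced projectively filtered objects of `D`. -/
def QObj (D : Type u) [Category.{v} D] := ObjectProperty.FullSubcategory (fun A : PObj D => A.filt.Reduced)

instance : Category.{v} (QObj D) := ObjectProperty.FullSubcategory.category _

/-- The inclusion functor `QD → PD`. -/
def qpInclusion (D : Type u) [Category.{v} D] : QObj D ⥤ PObj D :=
  ObjectProperty.ι _

/-- A category is extremally co-well-powered if every object has, up to
isomorphism, only a (small) set of extremal epimorphisms out of it. -/
def ECWP (C : Type u₂) [Category.{v₂} C] : Prop :=
  ∀ X : C, ∃ (ι : Type v₂) (Y : ι → C) (e : ∀ i, X ⟶ Y i),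
    (∀ i, ExtremalEpi (e i)) ∧
    ∀ ⦃Z : C⦄ (f : X ⟶ Z), ExtremalEpi f → ∃ (i : ι) (φ : Y i ≅ Z), e i ≫ φ.hom = f

/-- The category `(P, D)` associated to a projective filtration: objects are the
elements of `P`, morphisms `δ₁ → δ₂` are morphisms `g` of `D` with `g ∘ δ₁ = δ₂`. -/
def FiltCat {X : D} (P : ProjFilt X) : Type (max u v) := {δ : MorFrom X // δ ∈ P.carrier}

instance {X : D} (P : ProjFilt X) : Category.{v} (FiltCat P) where
  Hom δ₁ δ₂ := {g : δ₁.1.1 ⟶ δ₂.1.1 // δ₁.1.2 ≫ g = δ₂.1.2}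
  id δ := ⟨𝟙 _, Category.comp_id _⟩
  comp f g := ⟨f.1 ≫ g.1, by rw [← Category.assoc, f.2, g.2]⟩
  id_comp f := Subtype.ext (Category.id_comp _)
  comp_id f := Subtype.ext (Category.comp_id _)
  assoc f g h := Subtype.ext (Category.assoc _ _ _)

/-- The functor `(P, D) → D` sending an element of the filtration to its target. -/
def FiltDiagram {X : D} (P : ProjFilt X) : FiltCat P ⥤ D where
  obj δ := δ.1.1
  map g := g.1

/-- The canonical cone on the diagram of a projective filtration, with apex the
underlying object. -/
def filtCone {X : D} (P : ProjFilt X) : Limits.Cone (FiltDiagram P) where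
  pt := X
  π :=
    { app := fun δ => δ.1.2
      naturality := fun δ₁ δ₂ g => by
        have := g.2
        dsimp [FiltDiagram] at *
        simp [this] }

/-- A reduced projective filtration is an iso-filtration if the canonical cone
on its diagram is a limit cone, i.e. the limit exists and the canonical morphism
from the underlying object to it is an isomorphism. -/
def IsoFilt {X : D} (P : ProjFilt X) : Prop :=
  Nonempty (Limits.IsLimit (filtCone P))

/-- The category of iso-filtered objects of `D`. -/
def KObj (D : Type u) [Category.{v} D] :=
  ObjectProperty.FullSubcategory (fun A : QObj D => IsoFilt A.obj.filt)

instance : Category.{v} (KObj D) := ObjectProperty.FullSubcategory.category _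

/-- The inclusion functor `KD → QD`. -/
def kqInclusion (D : Type u) [Category.{v} D] : KObj D ⥤ QObj D :=
  ObjectProperty.ι _

/-- The forgetful functor `KD → D`. -/
def Kforget (D : Type u) [Category.{v} D] : KObj D ⥤ D :=
  kqInclusion D ⋙ qpInclusion D ⋙ Pforget D

/-- The smallest projective filtration containing a class of morphisms
(as a class). -/
def genSet {X : D} (S : Set (MorFrom X)) : Set (MorFrom X) :=
  {δ | ∀ P : ProjFilt X, S ⊆ P.carrier → δ ∈ P.carrier}

/-- The reduction of a class of morphisms: the saturation of the class of
extremal epimorphism parts of (extremal epi, mono)-factorisations of its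
elements. -/
def redSet {X : D} (S : Set (MorFrom X)) : Set (MorFrom X) :=
  {δ | ∃ ε : MorFrom X, ExtremalEpi ε.2 ∧
    (∃ δ' ∈ S, ∃ m : ε.1 ⟶ δ'.1, Mono m ∧ ε.2 ≫ m = δ'.2) ∧ Dom ε δ}

/-- The push forward of a filtration class along `f` (single morphism case). -/
def pushSet {X Y : D} (f : X ⟶ Y) (S : Set (MorFrom X)) : Set (MorFrom Y) :=
  {g | (⟨g.1, f ≫ g.2⟩ : MorFrom X) ∈ S}

/-- The discrete filtration on an object, as an iso-filtered object. -/
def kDiscreteObj (X : D) : KObj D where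
  obj :=
    { obj := (Pdiscrete D).obj X
      property := fun δ _ => ⟨⟨X, 𝟙 X⟩, trivial,
        ⟨(inferInstance : Epi (𝟙 X)), fun _ g m hm hgm => by
          haveI : IsSplitEpi m := ⟨⟨⟨g, hgm⟩⟩⟩
          exact isIso_of_mono_of_isSplitEpi m⟩,
        ⟨δ.2, Category.id_comp _⟩⟩ }
  property := ⟨{
    lift := fun c => c.π.app ⟨⟨X, 𝟙 X⟩, trivial⟩
    fac := fun c j => by
      have h := c.π.naturality (X := ⟨⟨X, 𝟙 X⟩, trivial⟩) (Y := j)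
        ⟨j.1.2, Category.id_comp _⟩
      dsimp [FiltDiagram, filtCone] at h ⊢
      exact h.symm.trans (Category.id_comp _)
    uniq := fun c m hm => by
      have h := hm ⟨⟨X, 𝟙 X⟩, trivial⟩
      rw [← Category.comp_id m]
      exact h }⟩

/-- The discrete filtration functor `D → KD`. -/
def kDiscrete (D : Type u) [Category.{v} D] : D ⥤ KObj D where
  obj X := kDiscreteObj X
  map f := ⟨⟨⟨f, fun _ _ => trivial⟩⟩⟩
  map_id _ := InducedCategory.hom_ext (InducedCategory.hom_ext (PHom.ext' rfl))
  map_comp _ _ := InducedCategory.hom_ext (InducedCategory.hom_ext (PHom.ext' rfl))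

/-- The morphism in `KD` from an iso-filtered object to the discrete object on
the target of an element of its filtration. -/
def kToDiscrete {A : KObj D} (δ : MorFrom A.obj.obj.base)
    (hδ : δ ∈ A.obj.obj.filt.carrier) : A ⟶ kDiscreteObj δ.1 :=
  ⟨⟨show PHom A.obj.obj ((kDiscreteObj δ.1).obj.obj) from
    ⟨δ.2, fun γ _ => A.obj.obj.filt.saturated' δ hδ _ ⟨γ.2, rfl⟩⟩⟩⟩

/-- The natural transformation `P(G) → P(H)` induced by `ν : G → H`. -/
def Pnat {E : Type u₂} [Category.{v₂} E] {G H : D ⥤ E} (ν : G ⟶ H) :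
    Pfunctor G ⟶ Pfunctor H where
  app A :=
    ⟨ν.app A.base, by
      rintro δ' ⟨δ, hδ, g, hg⟩
      exact ⟨δ, hδ, ⟨ν.app δ.1 ≫ g, by
        rw [← Category.assoc, ν.naturality, Category.assoc, hg]; rfl⟩⟩⟩
  naturality {A B} f := PHom.ext' (ν.naturality (PHom.toHom f))

theorem Dom.refl {X : D} (δ : MorFrom X) : Dom δ δ := ⟨𝟙 _, Category.comp_id _⟩

theorem Dom.trans {X : D} {δ₁ δ₂ δ₃ : MorFrom X} (h₁ : Dom δ₁ δ₂) (h₂ : Dom δ₂ δ₃) :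
    Dom δ₁ δ₃ := by
  obtain ⟨g, hg⟩ := h₁
  obtain ⟨k, hk⟩ := h₂
  exact ⟨g ≫ k, by rw [← Category.assoc, hg, hk]⟩

section ExtremalEpi

variable {C : Type u₂} [Category.{v₂} C]

theorem ExtremalEpi.of_comp {X Y Z : C} {f : X ⟶ Y} {g : Y ⟶ Z} (h : ExtremalEpi (f ≫ g)) :
    ExtremalEpi g := by
  have := h.1
  refine ⟨epi_of_epi f g, fun W g' m hm hg' => h.2 (f ≫ g') m hm ?_⟩
  rw [Category.assoc, hg']

theorem ExtremalEpi.comp_iso {X Y Z : C} {f : X ⟶ Y} (hf : ExtremalEpi f) (φ : Y ≅ Z) :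
    ExtremalEpi (f ≫ φ.hom) := by
  have := hf.1
  refine ⟨epi_comp _ _, fun W g m hm hgm => ?_⟩
  have : IsIso (m ≫ φ.inv) := hf.2 g (m ≫ φ.inv) (mono_comp _ _) (by simp [reassoc_of% hgm])
  simpa using (inferInstance : IsIso ((m ≫ φ.inv) ≫ φ.hom))

/-- Hom-sets are small, so it is enough to bound the targets of extremal epimorphisms. -/
theorem ecwp_of_small_targets
    (h : ∀ X : C, ∃ (ι : Type w) (_ : Small.{v₂} ι) (Y : ι → C),
      ∀ ⦃Z : C⦄ (f : X ⟶ Z), ExtremalEpi f → ∃ i, Nonempty (Y i ≅ Z)) :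
    ECWP C := by
  intro X
  obtain ⟨ι, _, Y, hY⟩ := h X
  let σ := (equivShrink.{v₂} ι).symm
  refine ⟨Σ i : Shrink.{v₂} ι, {g : X ⟶ Y (σ i) // ExtremalEpi g},
    fun p => Y (σ p.1), fun p => p.2.1, fun p => p.2.2, fun Z f hf => ?_⟩
  obtain ⟨i, ⟨φ⟩⟩ := hY f hf
  obtain ⟨i, rfl⟩ := σ.surjective i
  exact ⟨⟨i, f ≫ φ.inv, hf.comp_iso φ.symm⟩, φ, by simp⟩

end ExtremalEpi

theorem ProjFilt.Reduced.exists_rep_dom {X : D} {ι : Type v} {T : ι → D} {e : ∀ i, X ⟶ T i}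
    (hcov : ∀ ⦃Z : D⦄ (f : X ⟶ Z), ExtremalEpi f → ∃ (i : ι) (φ : T i ≅ Z), e i ≫ φ.hom = f)
    {Q : ProjFilt X} (hQ : Q.Reduced) {δ : MorFrom X} (hδ : δ ∈ Q.carrier) :
    ∃ i, ⟨T i, e i⟩ ∈ Q.carrier ∧ Dom ⟨T i, e i⟩ δ := by
  obtain ⟨ε, hε, hεe, h, hh⟩ := hQ δ hδ
  obtain ⟨i, φ, hφ⟩ := hcov ε.2 hεe
  refine ⟨i, Q.saturated' ε hε _ ⟨φ.inv, by simp [← hφ]⟩, φ.hom ≫ h, ?_⟩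
  rw [← Category.assoc, hφ, hh]

/-- A reduced filtration is determined by the representative extremal epimorphisms it contains. -/
theorem ProjFilt.small_reduced (hD : ECWP D) (X : D) : Small.{v} {Q : ProjFilt X // Q.Reduced} := by
  obtain ⟨ι, T, e, -, hcov⟩ := hD X
  refine small_of_injective (f := fun Q => {i : ι | ⟨T i, e i⟩ ∈ Q.1.carrier}) ?_
  rintro ⟨⟨P, _, _, _⟩, hP⟩ ⟨⟨Q, _, _, _⟩, hQ⟩ hPQ
  have hsub : ∀ {P Q : ProjFilt X}, P.Reduced → {i : ι | ⟨T i, e i⟩ ∈ P.carrier} ⊆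
      {i | ⟨T i, e i⟩ ∈ Q.carrier} → P.carrier ⊆ Q.carrier := by
    intro P Q hP hPQ δ hδ
    obtain ⟨i, hi, hiδ⟩ := hP.exists_rep_dom hcov hδ
    exact Q.saturated' _ (hPQ hi) δ hiδ
  congr
  exact (hsub hP hPQ.le).antisymm (hsub hQ hPQ.ge)

theorem ProjFilt.Reduced.isCofiltered {X : D} {Q : ProjFilt X} (hQ : Q.Reduced) :
    IsCofiltered (FiltCat Q) where
  cone_objs δ₁ δ₂ := by
    obtain ⟨δ, hδ, ⟨g₁, hg₁⟩, ⟨g₂, hg₂⟩⟩ := Q.directed' δ₁.1 δ₁.2 δ₂.1 δ₂.2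
    exact ⟨⟨δ, hδ⟩, ⟨g₁, hg₁⟩, ⟨g₂, hg₂⟩, trivial⟩
  cone_maps δ₁ δ₂ g₁ g₂ := by
    obtain ⟨ε, hε, hεe, h, hh⟩ := hQ δ₁.1 δ₁.2
    refine ⟨⟨ε, hε⟩, ⟨h, hh⟩, Subtype.ext (hεe.1.left_cancellation _ _ ?_)⟩
    change ε.2 ≫ h ≫ g₁.1 = ε.2 ≫ h ≫ g₂.1
    rw [reassoc_of% hh, reassoc_of% hh, g₁.2, g₂.2]
  nonempty := by
    obtain ⟨δ, hδ⟩ := Q.nonempty'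
    exact ⟨⟨δ, hδ⟩⟩

/-- The representative extremal epimorphisms in `Q` form a small initial subdiagram. -/
theorem ProjFilt.Reduced.hasLimit [Limits.HasLimits D] (hD : ECWP D) {X : D} {Q : ProjFilt X}
    (hQ : Q.Reduced) : HasLimit (FiltDiagram Q) := by
  obtain ⟨ι, T, e, -, hcov⟩ := hD X
  let rep : {i : ι // ⟨T i, e i⟩ ∈ Q.carrier} → FiltCat Q := fun i => ⟨⟨T i.1, e i.1⟩, i.2⟩
  have := hQ.isCofiltered
  have : (inducedFunctor rep).Initial := by
    refine Functor.initial_of_exists_of_isCofiltered_of_fullyFaithful _ fun δ => ?_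
    obtain ⟨i, hi, h, hh⟩ := hQ.exists_rep_dom hcov δ.2
    exact ⟨⟨i, hi⟩, ⟨⟨h, hh⟩⟩⟩
  exact Functor.Initial.hasLimit_of_comp (inducedFunctor rep)

section LimitFilt

variable {X : D} (Q : ProjFilt X) [HasLimit (FiltDiagram Q)]

theorem dom_limit_π {γ γ' : FiltCat Q} (h : Dom γ.1 γ'.1) :
    Dom ⟨γ.1.1, limit.π (FiltDiagram Q) γ⟩ ⟨γ'.1.1, limit.π (FiltDiagram Q) γ'⟩ :=
  ⟨h.choose, limit.w (FiltDiagram Q) (j := γ) (j' := γ') ⟨_, h.choose_spec⟩⟩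

@[simp]
theorem lift_filtCone_π (γ : FiltCat Q) :
    limit.lift (FiltDiagram Q) (filtCone Q) ≫ limit.π (FiltDiagram Q) γ = γ.1.2 :=
  limit.lift_π _ _

noncomputable def ProjFilt.limitFilt : ProjFilt (limit (FiltDiagram Q)) where
  carrier := {δ | ∃ γ : FiltCat Q, Dom ⟨γ.1.1, limit.π (FiltDiagram Q) γ⟩ δ}
  nonempty' := by
    obtain ⟨γ, hγ⟩ := Q.nonempty'
    exact ⟨_, ⟨γ, hγ⟩, Dom.refl _⟩
  directed' := by
    rintro δ₁ ⟨γ₁, hγ₁⟩ δ₂ ⟨γ₂, hγ₂⟩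
    obtain ⟨γ, hγ, ⟨u₁, hu₁⟩, ⟨u₂, hu₂⟩⟩ := Q.directed' γ₁.1 γ₁.2 γ₂.1 γ₂.2
    exact ⟨_, ⟨⟨γ, hγ⟩, Dom.refl _⟩,
      (dom_limit_π Q (γ := ⟨γ, hγ⟩) ⟨u₁, hu₁⟩).trans hγ₁,
      (dom_limit_π Q (γ := ⟨γ, hγ⟩) ⟨u₂, hu₂⟩).trans hγ₂⟩
  saturated' := by
    rintro δ₁ ⟨γ, hγ⟩ δ₂ hδ
    exact ⟨γ, hγ.trans hδ⟩

variable {Q}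

theorem ProjFilt.extremalEpi_limit_π {γ : FiltCat Q} (hγ : ExtremalEpi γ.1.2) :
    ExtremalEpi (limit.π (FiltDiagram Q) γ) :=
  ExtremalEpi.of_comp (f := limit.lift (FiltDiagram Q) (filtCone Q))
    (by rw [lift_filtCone_π]; exact hγ)

theorem ProjFilt.Reduced.limitFilt (hQ : Q.Reduced) : Q.limitFilt.Reduced := by
  rintro δ ⟨γ, hγδ⟩
  obtain ⟨ε, hε, hεe, h, hh⟩ := hQ γ.1 γ.2
  exact ⟨_, ⟨⟨ε, hε⟩, Dom.refl _⟩, Q.extremalEpi_limit_π hεe,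
    (dom_limit_π Q (γ := ⟨ε, hε⟩) ⟨h, hh⟩).trans hγδ⟩

noncomputable def ProjFilt.toLimitFilt : FiltCat Q ⥤ FiltCat Q.limitFilt where
  obj γ := ⟨⟨γ.1.1, limit.π (FiltDiagram Q) γ⟩, γ, Dom.refl _⟩
  map u := ⟨u.1, limit.w (FiltDiagram Q) u⟩

/-- Two maps out of a projection agree after precomposing with the projection at an extremal
element dominating it, which is an epimorphism. -/
theorem ProjFilt.Reduced.toLimitFilt_initial (hQ : Q.Reduced) : Q.toLimitFilt.Initial := by
  have := hQ.isCofiltered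
  refine Functor.initial_of_exists_of_isCofiltered _ (fun δ => ?_) fun {δ γ} s s' => ?_
  · obtain ⟨γ, h, hh⟩ := δ.2
    exact ⟨γ, ⟨⟨h, hh⟩⟩⟩
  · obtain ⟨ε, hε, hεe, h, hh⟩ := hQ γ.1 γ.2
    refine ⟨⟨ε, hε⟩, ⟨h, hh⟩, Subtype.ext ?_⟩
    have hw : limit.π (FiltDiagram Q) ⟨ε, hε⟩ ≫ h = limit.π (FiltDiagram Q) γ :=
      limit.w (FiltDiagram Q) (j := ⟨ε, hε⟩) (j' := γ) ⟨h, hh⟩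
    have hs (t : Q.toLimitFilt.obj γ ⟶ δ) : limit.π (FiltDiagram Q) ⟨ε, hε⟩ ≫ h ≫ t.1 = δ.1.2 :=
      (Category.assoc _ _ _).symm.trans ((congrArg (· ≫ t.1) hw).trans t.2)
    exact (Q.extremalEpi_limit_π (γ := ⟨ε, hε⟩) hεe).1.left_cancellation _ _
      ((hs s).trans (hs s').symm)

theorem ProjFilt.Reduced.isoFilt_limitFilt (hQ : Q.Reduced) : IsoFilt Q.limitFilt := by
  have := hQ.toLimitFilt_initial
  exact ⟨(Functor.Initial.isLimitWhiskerEquiv Q.toLimitFilt _) (limit.isLimit (FiltDiagram Q))⟩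

noncomputable def ProjFilt.Reduced.kObj (hQ : Q.Reduced) : KObj D :=
  ⟨⟨⟨limit (FiltDiagram Q), Q.limitFilt⟩, hQ.limitFilt⟩, hQ.isoFilt_limitFilt⟩

end LimitFilt

section RedPull

theorem EMCat.dom_of_comp_eq_comp_mono (hEM : EMCat D) {X : D} {ε δ : MorFrom X} {T : D}
    (hε : ExtremalEpi ε.2) {g : ε.1 ⟶ T} {μ : δ.1 ⟶ T} (hμ : Mono μ) (h : ε.2 ≫ g = δ.2 ≫ μ) :
    Dom ε δ := by
  obtain ⟨d, hd, -⟩ := hEM.diag ε.2 μ δ.2 g hε hμ h.symm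
  exact ⟨d, hd⟩

variable (hEM : EMCat D) {Z Y : D} (m : Z ⟶ Y) (R : ProjFilt Y)

include hEM in
theorem exists_redSet_dom_of_mem_pullSet {δ : MorFrom Z} (hδ : δ ∈ pullSet m R.carrier) :
    ∃ ε ∈ redSet (pullSet m R.carrier), ExtremalEpi ε.2 ∧ Dom ε δ := by
  obtain ⟨E, ε, μ, hε, hμ, hfac⟩ := hEM.fact δ.2
  exact ⟨⟨E, ε⟩, ⟨⟨E, ε⟩, hε, ⟨δ, hδ, μ, hμ, hfac⟩, Dom.refl _⟩, hε, ⟨μ, hfac⟩⟩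

/-- Directedness comes from the diagonal fill-in. -/
def redPull : ProjFilt Z where
  carrier := redSet (pullSet m R.carrier)
  nonempty' := by
    obtain ⟨b, hb⟩ := R.nonempty'
    obtain ⟨ε, hε, -⟩ := exists_redSet_dom_of_mem_pullSet hEM m R ⟨b, hb, rfl⟩
    exact ⟨ε, hε⟩
  directed' := by
    rintro δ₁ ⟨ε₁, hε₁, ⟨-, ⟨b₁, hb₁, rfl⟩, μ₁, hμ₁, hfac₁⟩, hd₁⟩
      δ₂ ⟨ε₂, hε₂, ⟨-, ⟨b₂, hb₂, rfl⟩, μ₂, hμ₂, hfac₂⟩, hd₂⟩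
    obtain ⟨b, hb, ⟨u₁, hu₁⟩, ⟨u₂, hu₂⟩⟩ := R.directed' b₁ hb₁ b₂ hb₂
    obtain ⟨E, ε, μ, hε, hμ, hfac⟩ := hEM.fact (m ≫ b.2)
    refine ⟨⟨E, ε⟩, ⟨⟨E, ε⟩, hε, ⟨_, ⟨b, hb, rfl⟩, μ, hμ, hfac⟩, Dom.refl _⟩, ?_, ?_⟩
    · refine (hEM.dom_of_comp_eq_comp_mono (g := μ ≫ u₁) hε hμ₁ ?_).trans hd₁
      simp only [reassoc_of% hfac, hu₁, hfac₁]
    · refine (hEM.dom_of_comp_eq_comp_mono (g := μ ≫ u₂) hε hμ₂ ?_).trans hd₂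
      simp only [reassoc_of% hfac, hu₂, hfac₂]
  saturated' := by
    rintro δ₁ ⟨ε, hε, hf, hd⟩ δ₂ hd₂
    exact ⟨ε, hε, hf, hd.trans hd₂⟩

theorem redPull_reduced : (redPull hEM m R).Reduced := by
  rintro δ ⟨ε, hε, hf, hd⟩
  exact ⟨ε, ⟨ε, hε, hf, Dom.refl _⟩, hε, hd⟩

theorem pull_mem_redPull {b : MorFrom Y} (hb : b ∈ R.carrier) :
    ⟨b.1, m ≫ b.2⟩ ∈ (redPull hEM m R).carrier := by
  obtain ⟨ε, hε, -, hd⟩ := exists_redSet_dom_of_mem_pullSet hEM m R ⟨b, hb, rfl⟩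
  exact (redPull hEM m R).saturated' ε hε _ hd

/-- Fill in the square between an extremal `α ∈ P` dominating `m ≫ b` and `ε ≫ μ = m ≫ b`. -/
theorem redPull_subset {P : ProjFilt Z} (hP : P.Reduced)
    (hm : ∀ b ∈ R.carrier, ⟨b.1, m ≫ b.2⟩ ∈ P.carrier) :
    (redPull hEM m R).carrier ⊆ P.carrier := by
  rintro γ ⟨ε, -, ⟨-, ⟨b, hb, rfl⟩, μ, hμ, hfac⟩, hεγ⟩
  obtain ⟨α, hα, hαe, k, hk⟩ := hP _ (hm b hb)
  have hαε : Dom α ε := hEM.dom_of_comp_eq_comp_mono (g := k) hαe hμ (hk.trans hfac.symm)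
  exact P.saturated' α hα _ (hαε.trans hεγ)

end RedPull

instance : (Kforget D).Faithful where
  map_injective h := InducedCategory.hom_ext (InducedCategory.hom_ext (PHom.ext' h))

def PHom.filtFunctor {A B : PObj D} (φ : PHom A B) : FiltCat B.filt ⥤ FiltCat A.filt where
  obj b := ⟨⟨b.1.1, φ.toHom ≫ b.1.2⟩, φ.mem b.1 b.2⟩
  map u := ⟨u.1, by rw [Category.assoc, u.2]⟩

section Reflection

variable {X : D} {Q : ProjFilt X} [HasLimit (FiltDiagram Q)] (hQ : Q.Reduced)

noncomputable def ProjFilt.Reduced.toKObj : PHom ⟨X, Q⟩ hQ.kObj.obj.obj where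
  toHom := limit.lift (FiltDiagram Q) (filtCone Q)
  mem := by
    rintro δ ⟨γ, h, hh⟩
    exact Q.saturated' γ.1 γ.2 _ ⟨h, (congrArg (· ≫ h) (lift_filtCone_π Q γ)).symm.trans
      ((Category.assoc _ _ _).trans (congrArg _ hh))⟩

variable {B : KObj D}

noncomputable def ProjFilt.Reduced.kLift (φ : PHom ⟨X, Q⟩ B.obj.obj) :
    PHom hQ.kObj.obj.obj B.obj.obj where
  toHom := B.property.some.lift ((limit.cone (FiltDiagram Q)).whisker φ.filtFunctor)
  mem b hb := ⟨φ.filtFunctor.obj ⟨b, hb⟩, 𝟙 _,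
    (Category.comp_id _).trans
      (B.property.some.fac ((limit.cone (FiltDiagram Q)).whisker φ.filtFunctor) ⟨b, hb⟩).symm⟩

theorem ProjFilt.Reduced.kLift_comp (φ : PHom ⟨X, Q⟩ B.obj.obj) (b : FiltCat B.obj.obj.filt) :
    (hQ.kLift φ).toHom ≫ b.1.2 = limit.π (FiltDiagram Q) (φ.filtFunctor.obj b) :=
  B.property.some.fac _ b

theorem ProjFilt.Reduced.toKObj_kLift (φ : PHom ⟨X, Q⟩ B.obj.obj) :
    hQ.toKObj.toHom ≫ (hQ.kLift φ).toHom = φ.toHom :=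
  B.property.some.hom_ext fun b =>
    (Category.assoc _ _ _).trans ((congrArg _ (hQ.kLift_comp φ b)).trans (lift_filtCone_π Q _))

end Reflection

section Factorisation

variable (hEM : EMCat D)

def redPullHom {Z : D} (B : PObj D) (m : Z ⟶ B.base) : PHom ⟨Z, redPull hEM m B.filt⟩ B :=
  ⟨m, fun _ hb => pull_mem_redPull hEM m B.filt hb⟩

/-- Each element of `redPull m R` is dominated by some extremal `ε` with `ε ≫ μ = m ≫ b`,
`μ` monic and `b ∈ R`, so the projection at `ε` is recovered from `k` after cancelling `μ`. -/
theorem mono_of_comp_eq_limit_π_redPull {Z Y : D} (m : Z ⟶ Y) (R : ProjFilt Y)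
    [HasLimit (FiltDiagram (redPull hEM m R))] (k : limit (FiltDiagram (redPull hEM m R)) ⟶ Y)
    (hk : ∀ b (hb : b ∈ R.carrier), k ≫ b.2 =
      limit.π (FiltDiagram (redPull hEM m R)) ⟨⟨b.1, m ≫ b.2⟩, pull_mem_redPull hEM m R hb⟩) :
    Mono k := by
  set Q := redPull hEM m R
  refine ⟨fun {V} a₁ a₂ ha => limit.hom_ext fun δ => ?_⟩
  obtain ⟨ε, hεe, ⟨-, ⟨b, hb, rfl⟩, μ, hμ, hfac⟩, u, hu⟩ := δ.2
  let γ : FiltCat Q := ⟨ε, ⟨ε, hεe, ⟨_, ⟨b, hb, rfl⟩, μ, hμ, hfac⟩, Dom.refl _⟩⟩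
  have hδ : limit.π (FiltDiagram Q) γ ≫ u = limit.π (FiltDiagram Q) δ :=
    limit.w (FiltDiagram Q) (j := γ) (j' := δ) ⟨u, hu⟩
  have hμk : limit.π (FiltDiagram Q) γ ≫ μ = k ≫ b.2 :=
    (limit.w (FiltDiagram Q) (j := γ) (j' := ⟨_, pull_mem_redPull hEM m R hb⟩)
      ⟨μ, hfac⟩).trans (hk b hb).symm
  have hε : a₁ ≫ limit.π (FiltDiagram Q) γ = a₂ ≫ limit.π (FiltDiagram Q) γ := by
    refine hμ.right_cancellation _ _ ?_
    calc (a₁ ≫ limit.π (FiltDiagram Q) γ) ≫ μ = a₁ ≫ k ≫ b.2 :=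
          (Category.assoc _ _ _).trans (congrArg _ hμk)
      _ = a₂ ≫ k ≫ b.2 := by rw [reassoc_of% ha]
      _ = (a₂ ≫ limit.π (FiltDiagram Q) γ) ≫ μ :=
          ((Category.assoc _ _ _).trans (congrArg _ hμk)).symm
  have hπδ (a : V ⟶ limit (FiltDiagram Q)) :
      a ≫ limit.π (FiltDiagram Q) δ = (a ≫ limit.π (FiltDiagram Q) γ) ≫ u :=
    (congrArg _ hδ).symm.trans (Category.assoc _ _ _).symm
  exact (hπδ a₁).trans ((congrArg (· ≫ u) hε).trans (hπδ a₂).symm)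

theorem nonempty_kObj_redPull_iso {A B : KObj D} (f : A ⟶ B) (hf : ExtremalEpi f)
    [HasLimit (FiltDiagram (redPull hEM f.hom.hom.toHom B.obj.obj.filt))] :
    Nonempty ((redPull_reduced hEM f.hom.hom.toHom B.obj.obj.filt).kObj ≅ B) := by
  set hQ := redPull_reduced hEM f.hom.hom.toHom B.obj.obj.filt
  have hQA := redPull_subset hEM _ _ A.obj.property f.hom.hom.mem
  let incl : PHom A.obj.obj ⟨_, redPull hEM f.hom.hom.toHom B.obj.obj.filt⟩ :=
    ⟨𝟙 _, fun γ hγ => (Category.id_comp γ.2).symm ▸ hQA hγ⟩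
  let g : A ⟶ hQ.kObj := ⟨⟨incl ≫ hQ.toKObj⟩⟩
  let m : hQ.kObj ⟶ B := ⟨⟨hQ.kLift (redPullHom hEM B.obj.obj f.hom.hom.toHom)⟩⟩
  have hgm : g ≫ m = f := (Kforget D).map_injective <|
    (Category.assoc _ _ _).trans ((Category.id_comp _).trans (hQ.toKObj_kLift _))
  have : Mono m := (Kforget D).mono_of_mono_map <|
    mono_of_comp_eq_limit_π_redPull hEM f.hom.hom.toHom B.obj.obj.filt _
      fun b hb => hQ.kLift_comp _ ⟨b, hb⟩
  have : IsIso m := hf.2 g m this hgm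
  exact ⟨asIso m⟩

end Factorisation

theorem kobj_ecwp_general [Limits.HasLimits D]
    (hecwp : ECWP D) (hEM : EMCat D) :
    ECWP (KObj D) := by
  refine ecwp_of_small_targets fun A => ?_
  have := ProjFilt.small_reduced hecwp A.obj.obj.base
  refine ⟨{Q : ProjFilt A.obj.obj.base // Q.Reduced}, inferInstance,
    fun Q => have := Q.2.hasLimit hecwp; Q.2.kObj, fun B f hf => ?_⟩
  have := (redPull_reduced hEM f.hom.hom.toHom B.obj.obj.filt).hasLimit hecwp
  exact ⟨⟨_, redPull_reduced hEM _ _⟩, nonempty_kObj_redPull_iso hEM f hf⟩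

/-- `KD` is extremally co-well-powered. -/
theorem kobj_ecwp [Limits.HasLimits D] [Limits.HasColimits D]
    (hecwp : ECWP D) (hEM : EMCat D) :
    ECWP (KObj D) :=
  kobj_ecwp_general hecwp hEM

end FilteredCats
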